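/- arXiv:1109.5400 — 7 statements merged into one kernel-verified Lean document; each statement's English description precedes it below -/
import Mathlib

section
/- Let Ψ be strictly decreasing and nonnegative on I = (a,b) and f be Ψ-concave on I. Then the one-sided generalized derivatives D⁺_Ψ f and D⁻_Ψ f are increasing functions on I; more precisely, for all w < z in I, D⁻_Ψ f(w) ≤ D⁺_Ψ f(w) ≤ D⁻_Ψ f(z) ≤ D⁺_Ψ f(z). -/
open Set Filter Topology

def PsiConcaveOn (Ψ f : ℝ → ℝ) (a b : ℝ) : Prop :=
  ∀ x y z : ℝ, x ∈ Set.Ioo a b → y ∈ Set.Ioo a b → z ∈ Set.Ioo a b →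
    x < y → y < z →
    (f x - f y) / (Ψ x - Ψ y) ≤ (f y - f z) / (Ψ y - Ψ z)

/-!
Write `s(x, y)` for the chord slope `(f x - f y) / (Ψ x - Ψ y)`. For `x < y < z` the slope
`s(x, z)` is the mediant of `s(x, y)` and `s(y, z)` with positive denominators (as `Ψ` is strictly
decreasing), so Ψ-concavity `s(x, y) ≤ s(y, z)` gives `s(x, y) ≤ s(x, z) ≤ s(y, z)`. Hence
`s(x, y)` is monotone in each endpoint, and every left chord at a point lies below every right
chord there, while every right chord at `w` lies below every left chord at `z > w`. Passing to
the limit gives the inequalities between the one-sided derivatives.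
-/

theorem div_le_add_div_add_and_add_div_add_le {K : Type*} [Field K] [LinearOrder K]
    [IsStrictOrderedRing K] {A B p q : K} (hp : 0 < p) (hq : 0 < q)
    (h : A / p ≤ B / q) : A / p ≤ (A + B) / (p + q) ∧ (A + B) / (p + q) ≤ B / q := by
  have hpq : 0 < p + q := add_pos hp hq
  rw [div_le_div_iff₀ hp hq] at h
  rw [div_le_div_iff₀ hp hpq, div_le_div_iff₀ hpq hq]
  constructor <;> nlinarith

theorem le_of_tendsto_of_tendsto_of_eventually_forall {α β γ : Type*} [TopologicalSpace γ]
    [LinearOrder γ] [OrderClosedTopology γ] {l₁ : Filter α} {l₂ : Filter β} [l₁.NeBot]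
    [l₂.NeBot] {u : α → γ} {v : β → γ} {A B : γ} (hu : Tendsto u l₁ (𝓝 A))
    (hv : Tendsto v l₂ (𝓝 B)) (h : ∀ᶠ x in l₁, ∀ᶠ y in l₂, u x ≤ v y) : A ≤ B :=
  le_of_tendsto hu (h.mono fun _ hx => ge_of_tendsto hv hx)

noncomputable def psiSlope (Ψ f : ℝ → ℝ) (x y : ℝ) : ℝ :=
  (f x - f y) / (Ψ x - Ψ y)

theorem psiSlope_comm (Ψ f : ℝ → ℝ) (x y : ℝ) : psiSlope Ψ f x y = psiSlope Ψ f y x := by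
  rw [psiSlope, psiSlope, ← neg_div_neg_eq, neg_sub, neg_sub]

namespace PsiConcaveOn

variable {a b : ℝ} {Ψ f : ℝ → ℝ}

theorem psiSlope_le_le (hΨ : StrictAntiOn Ψ (Ioo a b)) (hf : PsiConcaveOn Ψ f a b)
    {x y z : ℝ} (hx : x ∈ Ioo a b) (hy : y ∈ Ioo a b) (hz : z ∈ Ioo a b) (hxy : x < y)
    (hyz : y < z) :
    psiSlope Ψ f x y ≤ psiSlope Ψ f x z ∧ psiSlope Ψ f x z ≤ psiSlope Ψ f y z := by
  have hmediant : psiSlope Ψ f x z =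
      ((f x - f y) + (f y - f z)) / ((Ψ x - Ψ y) + (Ψ y - Ψ z)) := by
    rw [psiSlope, sub_add_sub_cancel, sub_add_sub_cancel]
  rw [hmediant]
  exact div_le_add_div_add_and_add_div_add_le (sub_pos.2 (hΨ hx hy hxy))
    (sub_pos.2 (hΨ hy hz hyz)) (hf x y z hx hy hz hxy hyz)

theorem psiSlope_mono (hΨ : StrictAntiOn Ψ (Ioo a b)) (hf : PsiConcaveOn Ψ f a b)
    {x y u v : ℝ} (hx : x ∈ Ioo a b) (hy : y ∈ Ioo a b) (hu : u ∈ Ioo a b) (hv : v ∈ Ioo a b)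
    (hxy : x < y) (huv : u < v) (hxu : x ≤ u) (hyv : y ≤ v) :
    psiSlope Ψ f x y ≤ psiSlope Ψ f u v := by
  have hxv : psiSlope Ψ f x y ≤ psiSlope Ψ f x v := by
    rcases hyv.eq_or_lt with rfl | hyv
    · rfl
    · exact (hf.psiSlope_le_le hΨ hx hy hv hxy hyv).1
  have hvu : psiSlope Ψ f x v ≤ psiSlope Ψ f u v := by
    rcases hxu.eq_or_lt with rfl | hxu
    · rfl
    · exact (hf.psiSlope_le_le hΨ hx hu hv hxu huv).2
  exact hxv.trans hvu

theorem le_of_tendsto_left_of_tendsto_right (hΨ : StrictAntiOn Ψ (Ioo a b))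
    (hf : PsiConcaveOn Ψ f a b) {w L R : ℝ} (hw : w ∈ Ioo a b)
    (hL : Tendsto (fun t => psiSlope Ψ f t w) (𝓝[Ioo a w] w) (𝓝 L))
    (hR : Tendsto (fun x => psiSlope Ψ f w x) (𝓝[Ioo w b] w) (𝓝 R)) : L ≤ R := by
  have : (𝓝[Ioo a w] w).NeBot := right_nhdsWithin_Ioo_neBot hw.1
  have : (𝓝[Ioo w b] w).NeBot := left_nhdsWithin_Ioo_neBot hw.2
  refine le_of_tendsto_of_tendsto_of_eventually_forall hL hR ?_
  filter_upwards [self_mem_nhdsWithin] with t ht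
  filter_upwards [self_mem_nhdsWithin] with x hx
  exact hf.psiSlope_mono hΨ ⟨ht.1, ht.2.trans hw.2⟩ hw hw ⟨hw.1.trans hx.1, hx.2⟩ ht.2 hx.1
    ht.2.le hx.1.le

theorem le_of_tendsto_right_of_tendsto_left (hΨ : StrictAntiOn Ψ (Ioo a b))
    (hf : PsiConcaveOn Ψ f a b) {w z R L : ℝ} (hw : w ∈ Ioo a b) (hz : z ∈ Ioo a b)
    (hwz : w < z) (hR : Tendsto (fun x => psiSlope Ψ f w x) (𝓝[Ioo w b] w) (𝓝 R))
    (hL : Tendsto (fun t => psiSlope Ψ f t z) (𝓝[Ioo a z] z) (𝓝 L)) : R ≤ L := by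
  have : (𝓝[Ioo w b] w).NeBot := left_nhdsWithin_Ioo_neBot hw.2
  have : (𝓝[Ioo a z] z).NeBot := right_nhdsWithin_Ioo_neBot hz.1
  refine le_of_tendsto_of_tendsto_of_eventually_forall hR hL ?_
  have hxz : ∀ᶠ x in 𝓝[Ioo w b] w, x < z :=
    eventually_nhdsWithin_of_eventually_nhds (eventually_lt_nhds hwz)
  have hwt : ∀ᶠ t in 𝓝[Ioo a z] z, w < t :=
    eventually_nhdsWithin_of_eventually_nhds (eventually_gt_nhds hwz)
  filter_upwards [self_mem_nhdsWithin, hxz] with x hx hxz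
  filter_upwards [self_mem_nhdsWithin, hwt] with t ht hwt
  exact hf.psiSlope_mono hΨ hw ⟨hw.1.trans hx.1, hx.2⟩ ⟨ht.1, ht.2.trans hz.2⟩ hz hx.1 ht.2
    hwt.le hxz.le

end PsiConcaveOn

theorem stmt_2_general (a b : ℝ) (Ψ f Dm Dp : ℝ → ℝ)
    (hΨanti : StrictAntiOn Ψ (Set.Ioo a b))
    (hf : PsiConcaveOn Ψ f a b)
    (hDm : ∀ y ∈ Set.Ioo a b,
      Tendsto (fun x => (f x - f y) / (Ψ x - Ψ y)) (𝓝[Set.Ioo a y] y) (𝓝 (Dm y)))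
    (hDp : ∀ y ∈ Set.Ioo a b,
      Tendsto (fun x => (f x - f y) / (Ψ x - Ψ y)) (𝓝[Set.Ioo y b] y) (𝓝 (Dp y))) :
    ∀ w ∈ Set.Ioo a b, ∀ z ∈ Set.Ioo a b, w < z →
      Dm w ≤ Dp w ∧ Dp w ≤ Dm z ∧ Dm z ≤ Dp z := by
  have hL : ∀ y ∈ Ioo a b, Tendsto (fun t => psiSlope Ψ f t y) (𝓝[Ioo a y] y) (𝓝 (Dm y)) :=
    hDm
  have hR : ∀ y ∈ Ioo a b, Tendsto (fun x => psiSlope Ψ f y x) (𝓝[Ioo y b] y) (𝓝 (Dp y)) :=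
    fun y hy => (hDp y hy).congr fun x => psiSlope_comm Ψ f x y
  intro w hw z hz hwz
  exact ⟨hf.le_of_tendsto_left_of_tendsto_right hΨanti hw (hL w hw) (hR w hw),
    hf.le_of_tendsto_right_of_tendsto_left hΨanti hw hz hwz (hR w hw) (hL z hz),
    hf.le_of_tendsto_left_of_tendsto_right hΨanti hz (hL z hz) (hR z hz)⟩

theorem stmt_2 (a b : ℝ) (Ψ f Dm Dp : ℝ → ℝ)
    (hΨanti : StrictAntiOn Ψ (Set.Ioo a b))
    (hΨpos : ∀ x ∈ Set.Ioo a b, 0 ≤ Ψ x)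
    (hf : PsiConcaveOn Ψ f a b)
    (hDm : ∀ y ∈ Set.Ioo a b,
      Tendsto (fun x => (f x - f y) / (Ψ x - Ψ y)) (𝓝[Set.Ioo a y] y) (𝓝 (Dm y)))
    (hDp : ∀ y ∈ Set.Ioo a b,
      Tendsto (fun x => (f x - f y) / (Ψ x - Ψ y)) (𝓝[Set.Ioo y b] y) (𝓝 (Dp y))) :
    ∀ w ∈ Set.Ioo a b, ∀ z ∈ Set.Ioo a b, w < z →
      Dm w ≤ Dp w ∧ Dp w ≤ Dm z ∧ Dm z ≤ Dp z :=
  stmt_2_general a b Ψ f Dm Dp hΨanti hf hDm hDp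
end

section
/- Let Ψ be strictly decreasing and nonnegative on I = (a,b). If Ψ is Lipschitz continuous on I, then every Ψ-concave function on I is Lipschitz continuous on each compact subinterval [c,d] ⊂ I; more precisely, there is a constant K (depending on c, d) with |f(x)-f(y)| ≤ K|Ψ(x)-Ψ(y)| for all x, y ∈ [c,d]. -/
open Set Filter Topology

/-!
Ψ-concavity says that the Ψ-slopes `(f x - f y) / (Ψ x - Ψ y)` of adjacent pairs increase; since
the slope of `(x, z)` is a mediant of those of `(x, y)` and `(y, z)`, Ψ-slopes increase as either
endpoint moves to the right. Choosing `c' < c` and `d < d'` inside `(a, b)`, every Ψ-slope of a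
pair in `[c, d]` is therefore squeezed between the Ψ-slopes of `(c', c)` and `(d, d')`, which
bounds `|f x - f y| / |Ψ x - Ψ y|` on `[c, d]`; the Lipschitz bound on `Ψ` then gives the bound
in `|x - y|`.
-/

theorem div_le_add_div_add {α : Type*} [Field α] [LinearOrder α] [IsStrictOrderedRing α]
    {u₁ v₁ u₂ v₂ : α} (hv₁ : 0 < v₁) (hv₂ : 0 < v₂)
    (h : u₁ / v₁ ≤ u₂ / v₂) : u₁ / v₁ ≤ (u₁ + u₂) / (v₁ + v₂) := by
  rw [div_le_div_iff₀ hv₁ hv₂] at h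
  rw [div_le_div_iff₀ hv₁ (by linarith)]
  nlinarith

theorem add_div_add_le_div {α : Type*} [Field α] [LinearOrder α] [IsStrictOrderedRing α]
    {u₁ v₁ u₂ v₂ : α} (hv₁ : 0 < v₁) (hv₂ : 0 < v₂)
    (h : u₁ / v₁ ≤ u₂ / v₂) : (u₁ + u₂) / (v₁ + v₂) ≤ u₂ / v₂ := by
  rw [div_le_div_iff₀ hv₁ hv₂] at h
  rw [div_le_div_iff₀ (by linarith) hv₂]
  nlinarith

theorem abs_sub_le_of_psiSlope_mem_Icc {Ψ f : ℝ → ℝ} {x y m M : ℝ} (hΨ : Ψ x ≠ Ψ y)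
    (h : psiSlope Ψ f x y ∈ Icc m M) : |f x - f y| ≤ max |m| |M| * |Ψ x - Ψ y| := by
  have hfac : f x - f y = psiSlope Ψ f x y * (Ψ x - Ψ y) :=
    (div_mul_cancel₀ _ (sub_ne_zero.2 hΨ)).symm
  rw [hfac, abs_mul]
  exact mul_le_mul_of_nonneg_right (abs_le_max_abs_abs h.1 h.2) (abs_nonneg _)

namespace PsiConcaveOn

variable {Ψ f : ℝ → ℝ} {a b : ℝ}

theorem psiSlope_le_psiSlope (hf : PsiConcaveOn Ψ f a b) {x y z : ℝ} (hx : x ∈ Ioo a b)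
    (hy : y ∈ Ioo a b) (hz : z ∈ Ioo a b) (hxy : x < y) (hyz : y < z) :
    psiSlope Ψ f x y ≤ psiSlope Ψ f y z :=
  hf x y z hx hy hz hxy hyz

theorem psiSlope_le_psiSlope_left (hf : PsiConcaveOn Ψ f a b) (hΨ : StrictAntiOn Ψ (Ioo a b))
    {x y z : ℝ} (hx : x ∈ Ioo a b) (hy : y ∈ Ioo a b) (hz : z ∈ Ioo a b) (hxy : x < y)
    (hyz : y < z) : psiSlope Ψ f x y ≤ psiSlope Ψ f x z := by
  have h := div_le_add_div_add (sub_pos.2 (hΨ hx hy hxy)) (sub_pos.2 (hΨ hy hz hyz))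
    (hf.psiSlope_le_psiSlope hx hy hz hxy hyz)
  rwa [sub_add_sub_cancel, sub_add_sub_cancel] at h

theorem psiSlope_le_psiSlope_right (hf : PsiConcaveOn Ψ f a b) (hΨ : StrictAntiOn Ψ (Ioo a b))
    {x y z : ℝ} (hx : x ∈ Ioo a b) (hy : y ∈ Ioo a b) (hz : z ∈ Ioo a b) (hxy : x < y)
    (hyz : y < z) : psiSlope Ψ f x z ≤ psiSlope Ψ f y z := by
  have h := add_div_add_le_div (sub_pos.2 (hΨ hx hy hxy)) (sub_pos.2 (hΨ hy hz hyz))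
    (hf.psiSlope_le_psiSlope hx hy hz hxy hyz)
  rwa [sub_add_sub_cancel, sub_add_sub_cancel] at h

theorem psiSlope_mem_Icc (hf : PsiConcaveOn Ψ f a b) (hΨ : StrictAntiOn Ψ (Ioo a b))
    {c' c d d' x y : ℝ} (hc' : c' ∈ Ioo a b) (hd' : d' ∈ Ioo a b) (hc'c : c' < c) (hcx : c ≤ x)
    (hxy : x < y) (hyd : y ≤ d) (hdd' : d < d') :
    psiSlope Ψ f x y ∈ Icc (psiSlope Ψ f c' c) (psiSlope Ψ f d d') := by
  have mem {t : ℝ} (h₁ : c' < t) (h₂ : t < d') : t ∈ Ioo a b := ⟨hc'.1.trans h₁, h₂.trans hd'.2⟩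
  have hx := mem (hc'c.trans_le hcx) (by linarith)
  have hy := mem (by linarith) (hyd.trans_lt hdd')
  constructor
  · calc psiSlope Ψ f c' c ≤ psiSlope Ψ f c' x := by
          rcases hcx.eq_or_lt with rfl | hcx
          · rfl
          · exact hf.psiSlope_le_psiSlope_left hΨ hc' (mem hc'c (by linarith)) hx hc'c hcx
      _ ≤ psiSlope Ψ f x y := hf.psiSlope_le_psiSlope hc' hx hy (hc'c.trans_le hcx) hxy
  · calc psiSlope Ψ f x y ≤ psiSlope Ψ f y d' := hf.psiSlope_le_psiSlope hx hy hd' hxy (by linarith)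
      _ ≤ psiSlope Ψ f d d' := by
          rcases hyd.eq_or_lt with rfl | hyd
          · rfl
          · exact hf.psiSlope_le_psiSlope_right hΨ hy (mem (by linarith) hdd') hd' hyd hdd'

theorem exists_abs_sub_le_mul_abs_sub (hf : PsiConcaveOn Ψ f a b)
    (hΨ : StrictAntiOn Ψ (Ioo a b)) {c d : ℝ} (hac : a < c) (hcd : c ≤ d) (hdb : d < b) :
    ∃ K, 0 ≤ K ∧ ∀ x ∈ Icc c d, ∀ y ∈ Icc c d, |f x - f y| ≤ K * |Ψ x - Ψ y| := by
  obtain ⟨c', hac', hc'c⟩ := exists_between hac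
  obtain ⟨d', hdd', hd'b⟩ := exists_between hdb
  have hc' : c' ∈ Ioo a b := ⟨hac', by linarith⟩
  have hd' : d' ∈ Ioo a b := ⟨by linarith, hd'b⟩
  refine ⟨max |psiSlope Ψ f c' c| |psiSlope Ψ f d d'|, le_max_of_le_left (abs_nonneg _), ?_⟩
  intro x hx y hy
  wlog hxy : x < y generalizing x y
  · rcases (not_lt.1 hxy).eq_or_lt with rfl | hyx
    · simp
    · rw [abs_sub_comm (f x), abs_sub_comm (Ψ x)]
      exact this y hy x hx hyx
  have hsub : Icc c d ⊆ Ioo a b := Icc_subset_Ioo hac hdb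
  have hΨxy : Ψ x ≠ Ψ y := (hΨ (hsub hx) (hsub hy) hxy).ne'
  exact abs_sub_le_of_psiSlope_mem_Icc hΨxy
    (hf.psiSlope_mem_Icc hΨ hc' hd' hc'c hx.1 hxy hy.2 hdd')

end PsiConcaveOn

theorem stmt_4_general (a b : ℝ) (Ψ f : ℝ → ℝ) (L : ℝ)
    (hΨanti : StrictAntiOn Ψ (Set.Ioo a b))
    (hΨlip : ∀ x ∈ Set.Ioo a b, ∀ y ∈ Set.Ioo a b, |Ψ x - Ψ y| ≤ L * |x - y|)
    (hf : PsiConcaveOn Ψ f a b) :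
    ∀ c d : ℝ, a < c → c ≤ d → d < b →
      ∃ K : ℝ, (∀ x ∈ Set.Icc c d, ∀ y ∈ Set.Icc c d, |f x - f y| ≤ K * |Ψ x - Ψ y|) ∧
        ∀ x ∈ Set.Icc c d, ∀ y ∈ Set.Icc c d, |f x - f y| ≤ K * L * |x - y| := by
  intro c d hac hcd hdb
  obtain ⟨K, hK, hbound⟩ := hf.exists_abs_sub_le_mul_abs_sub hΨanti hac hcd hdb
  have hsub : Icc c d ⊆ Ioo a b := Icc_subset_Ioo hac hdb
  refine ⟨K, hbound, fun x hx y hy => ?_⟩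
  calc |f x - f y| ≤ K * |Ψ x - Ψ y| := hbound x hx y hy
    _ ≤ K * (L * |x - y|) := mul_le_mul_of_nonneg_left (hΨlip x (hsub hx) y (hsub hy)) hK
    _ = K * L * |x - y| := by ring

theorem stmt_4 (a b : ℝ) (Ψ f : ℝ → ℝ) (L : ℝ)
    (hΨanti : StrictAntiOn Ψ (Set.Ioo a b))
    (hΨpos : ∀ x ∈ Set.Ioo a b, 0 ≤ Ψ x)
    (hΨlip : ∀ x ∈ Set.Ioo a b, ∀ y ∈ Set.Ioo a b, |Ψ x - Ψ y| ≤ L * |x - y|)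
    (hf : PsiConcaveOn Ψ f a b) :
    ∀ c d : ℝ, a < c → c ≤ d → d < b →
      ∃ K : ℝ, (∀ x ∈ Set.Icc c d, ∀ y ∈ Set.Icc c d, |f x - f y| ≤ K * |Ψ x - Ψ y|) ∧
        ∀ x ∈ Set.Icc c d, ∀ y ∈ Set.Icc c d, |f x - f y| ≤ K * L * |x - y| :=
  stmt_4_general a b Ψ f L hΨanti hΨlip hf
end

section
/- Let Ψ be strictly decreasing and nonnegative on I = (a,b) with lim_{x→a⁺} Ψ(x) = ∞, and let f ≥ 0 be Ψ-concave on I. Then lim_{x→a⁺} D⁺_Ψ f(x) ≥ 0. -/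
/- For fixed `y`, `Ψ`-concavity bounds every left slope `(f x - f y) / (Ψ x - Ψ y)`, `x < y`,
by `D⁺_Ψ f(y)`. As `x → a⁺` the denominator tends to `∞` while `f x ≥ 0`, so these slopes are
eventually at least `-f y / (Ψ x - Ψ y) → 0`. -/

open Set Filter Topology

theorem PsiConcaveOn.slope_le_of_tendsto {Ψ f : ℝ → ℝ} {a b x y L : ℝ}
    (hf : PsiConcaveOn Ψ f a b) (hx : x ∈ Ioo a b) (hxy : x < y) (hyb : y < b)
    (hL : Tendsto (fun z => (f z - f y) / (Ψ z - Ψ y)) (𝓝[Ioo y b] y) (𝓝 L)) :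
    (f x - f y) / (Ψ x - Ψ y) ≤ L := by
  have : (𝓝[Ioo y b] y).NeBot := by
    rw [nhdsWithin_Ioo_eq_nhdsGT hyb]; infer_instance
  refine ge_of_tendsto hL ?_
  filter_upwards [self_mem_nhdsWithin] with z hz
  have hy : y ∈ Ioo a b := ⟨hx.1.trans hxy, hyb⟩
  have hz' : z ∈ Ioo a b := ⟨hy.1.trans hz.1, hz.2⟩
  have hslope := hf x y z hx hy hz' hxy hz.1
  rwa [← neg_div_neg_eq (f y - f z), neg_sub, neg_sub] at hslope

theorem nonneg_of_eventually_slope_le {α : Type*} {l : Filter α} [l.NeBot] {Ψ f : α → ℝ}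
    {c d L : ℝ} (hΨ : Tendsto Ψ l atTop) (hf : ∀ᶠ x in l, 0 ≤ f x)
    (hL : ∀ᶠ x in l, (f x - c) / (Ψ x - d) ≤ L) : 0 ≤ L := by
  have hlim : Tendsto (fun x => -c / (Ψ x - d)) l (𝓝 0) :=
    tendsto_const_nhds.div_atTop (tendsto_atTop_add_const_right _ (-d) hΨ)
  refine le_of_tendsto hlim ?_
  filter_upwards [hf, hL, hΨ.eventually_gt_atTop d] with x hfx hLx hΨx
  calc -c / (Ψ x - d) ≤ (f x - c) / (Ψ x - d) := by
        gcongr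
        linarith
    _ ≤ L := hLx

theorem stmt_6_general (a b : ℝ) (Ψ f Dp : ℝ → ℝ)
    (hΨtop : Tendsto Ψ (𝓝[Set.Ioo a b] a) atTop)
    (hfpos : ∀ x ∈ Set.Ioo a b, 0 ≤ f x)
    (hf : PsiConcaveOn Ψ f a b)
    (hDp : ∀ y ∈ Set.Ioo a b,
      Tendsto (fun x => (f x - f y) / (Ψ x - Ψ y)) (𝓝[Set.Ioo y b] y) (𝓝 (Dp y))) :
    ∀ x ∈ Set.Ioo a b, 0 ≤ Dp x := by
  rintro y ⟨hay, hyb⟩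
  have : (𝓝[Ioo a b] a).NeBot := by
    rw [nhdsWithin_Ioo_eq_nhdsGT (hay.trans hyb)]; infer_instance
  refine nonneg_of_eventually_slope_le (c := f y) (d := Ψ y) hΨtop
    (eventually_nhdsWithin_of_forall hfpos) ?_
  filter_upwards [self_mem_nhdsWithin, nhdsWithin_le_nhds (Iio_mem_nhds hay)] with x hx hxy
  exact hf.slope_le_of_tendsto hx hxy hyb (hDp y ⟨hay, hyb⟩)

/-- Since `D⁺_Ψ f` is increasing on `I = (a,b)`, its limit as `x → a⁺` equals its
infimum over `I`; hence `lim_{x→a⁺} D⁺_Ψ f(x) ≥ 0` is expressed as `0 ≤ Dp x` for all `x ∈ I`. -/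
theorem stmt_6 (a b : ℝ) (Ψ f Dp : ℝ → ℝ)
    (hab : a < b)
    (hΨanti : StrictAntiOn Ψ (Set.Ioo a b))
    (hΨpos : ∀ x ∈ Set.Ioo a b, 0 ≤ Ψ x)
    (hΨtop : Tendsto Ψ (𝓝[Set.Ioo a b] a) atTop)
    (hfpos : ∀ x ∈ Set.Ioo a b, 0 ≤ f x)
    (hf : PsiConcaveOn Ψ f a b)
    (hDp : ∀ y ∈ Set.Ioo a b,
      Tendsto (fun x => (f x - f y) / (Ψ x - Ψ y)) (𝓝[Set.Ioo y b] y) (𝓝 (Dp y)))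
    (hDpMono : MonotoneOn Dp (Set.Ioo a b)) :
    ∀ x ∈ Set.Ioo a b, 0 ≤ Dp x :=
  stmt_6_general a b Ψ f Dp hΨtop hfpos hf hDp
end

section
/- Let Ψ be strictly decreasing and nonnegative on I = (a,b) with lim_{x→a⁺} Ψ(x) = ∞. Then every nonnegative Ψ-concave function f on I is decreasing on I. -/
/-!
If `f y < f z` for some `y < z`, the `Ψ`-slope `s` of `f` on `[y, z]` is negative, and
`Ψ`-concavity gives `f x ≤ f y + s (Ψ x - Ψ y)` for `x < y`. Since `Ψ x → ∞` as `x → a⁺`,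
this forces `f x → -∞`, contradicting `f ≥ 0`.
-/

open Set Filter Topology

namespace PsiConcaveOn

variable {a b : ℝ} {Ψ f : ℝ → ℝ}

theorem le_add_slope_mul (hf : PsiConcaveOn Ψ f a b) (hΨanti : StrictAntiOn Ψ (Ioo a b))
    {x y z : ℝ} (hx : x ∈ Ioo a b) (hy : y ∈ Ioo a b) (hz : z ∈ Ioo a b)
    (hxy : x < y) (hyz : y < z) :
    f x ≤ f y + (f y - f z) / (Ψ y - Ψ z) * (Ψ x - Ψ y) := by
  have hΨxy : 0 < Ψ x - Ψ y := sub_pos.mpr (hΨanti hx hy hxy)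
  have := (div_le_iff₀ hΨxy).mp (hf x y z hx hy hz hxy hyz)
  linarith

theorem tendsto_atBot_of_lt (hf : PsiConcaveOn Ψ f a b) (hΨanti : StrictAntiOn Ψ (Ioo a b))
    (hΨtop : Tendsto Ψ (𝓝[Ioo a b] a) atTop) {y z : ℝ} (hy : y ∈ Ioo a b)
    (hz : z ∈ Ioo a b) (hyz : y < z) (hfyz : f y < f z) :
    Tendsto f (𝓝[Ioo a b] a) atBot := by
  set s := (f y - f z) / (Ψ y - Ψ z)
  have hs : s < 0 := div_neg_of_neg_of_pos (sub_neg.mpr hfyz) (sub_pos.mpr (hΨanti hy hz hyz))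
  have hchord : Tendsto (fun x ↦ f y + s * (Ψ x - Ψ y)) (𝓝[Ioo a b] a) atBot := by
    simp_rw [sub_eq_add_neg (Ψ _)]
    exact tendsto_atBot_add_const_left _ _
      ((tendsto_atTop_add_const_right _ _ hΨtop).const_mul_atTop_of_neg hs)
  refine tendsto_atBot_mono' _ ?_ hchord
  filter_upwards [self_mem_nhdsWithin, nhdsWithin_le_nhds (gt_mem_nhds hy.1)] with x hx hxy
  exact hf.le_add_slope_mul hΨanti hx hy hz hxy hyz

end PsiConcaveOn

theorem stmt_7_general (a b : ℝ) (Ψ f : ℝ → ℝ)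
    (hΨanti : StrictAntiOn Ψ (Set.Ioo a b))
    (hΨtop : Tendsto Ψ (𝓝[Set.Ioo a b] a) atTop)
    (hfpos : ∀ x ∈ Set.Ioo a b, 0 ≤ f x)
    (hf : PsiConcaveOn Ψ f a b) :
    AntitoneOn f (Set.Ioo a b) := by
  intro y hy z hz hyz
  rcases hyz.eq_or_lt with rfl | hyz
  · rfl
  by_contra! hfyz
  have := left_nhdsWithin_Ioo_neBot (hy.1.trans hy.2)
  obtain ⟨x, hx, hfx⟩ :=
    (eventually_mem_nhdsWithin.and
      ((hf.tendsto_atBot_of_lt hΨanti hΨtop hy hz hyz hfyz).eventually_lt_atBot 0)).exists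
  exact (hfpos x hx).not_gt hfx

theorem stmt_7 (a b : ℝ) (Ψ f : ℝ → ℝ)
    (hΨanti : StrictAntiOn Ψ (Set.Ioo a b))
    (hΨpos : ∀ x ∈ Set.Ioo a b, 0 ≤ Ψ x)
    (hΨtop : Tendsto Ψ (𝓝[Set.Ioo a b] a) atTop)
    (hfpos : ∀ x ∈ Set.Ioo a b, 0 ≤ f x)
    (hf : PsiConcaveOn Ψ f a b) :
    AntitoneOn f (Set.Ioo a b) :=
  stmt_7_general a b Ψ f hΨanti hΨtop hfpos hf
end

section
/- Let C ⊂ ℝ be measurable, and suppose x < z with m(C ∩ (x,z)) > 0, where every point of C is a point of Lebesgue density of C. Then there exists y ∈ C ∩ (x,z) such that m(C ∩ (x,y)) > 0 and m(C ∩ (y,z)) > 0. -/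
/-!
Any `y ∈ C ∩ (x, z)` works. If `C` were null on one side of `y`, say on `(x, y)`, then on the
lopsided intervals `(y - ε, y + ε²)` the density ratio of `C` would be at most `ε² / ε = ε`,
contradicting the fact that `y` is a point of density of `C`.
-/

open Set Filter Topology MeasureTheory

def IsDensityPoint (C : Set ℝ) (y : ℝ) : Prop :=
  Tendsto (fun p : ℝ × ℝ => volume (C ∩ Ioo p.1 p.2) / volume (Ioo p.1 p.2))
    (𝓝[{p : ℝ × ℝ | p.1 < y ∧ y < p.2}] (y, y)) (𝓝 1)

theorem tendsto_sq_nhdsGT_zero : Tendsto (· ^ 2 : ℝ → ℝ) (𝓝[>] 0) (𝓝[>] 0) :=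
  tendsto_nhdsWithin_iff.2
    ⟨((continuous_pow 2).tendsto' 0 0 (zero_pow two_ne_zero)).mono_left nhdsWithin_le_nhds,
      eventually_mem_nhdsWithin.mono fun ε (hε : 0 < ε) => pow_pos hε 2⟩

theorem ENNReal.tendsto_ofReal_nhdsGT_zero : Tendsto ENNReal.ofReal (𝓝[>] 0) (𝓝 0) :=
  (ENNReal.continuous_ofReal.tendsto' 0 0 ENNReal.ofReal_zero).mono_left nhdsWithin_le_nhds

theorem tendsto_straddle_nhdsWithin {α : Type*} {l : Filter α} {y : ℝ} {a b : α → ℝ}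
    (ha : Tendsto a l (𝓝[>] 0)) (hb : Tendsto b l (𝓝[>] 0)) :
    Tendsto (fun t => (y - a t, y + b t)) l (𝓝[{p : ℝ × ℝ | p.1 < y ∧ y < p.2}] (y, y)) := by
  obtain ⟨ha0, ha_pos⟩ := tendsto_nhdsWithin_iff.1 ha
  obtain ⟨hb0, hb_pos⟩ := tendsto_nhdsWithin_iff.1 hb
  refine tendsto_nhdsWithin_iff.2 ⟨?_, ?_⟩
  · simpa using (tendsto_const_nhds.sub ha0).prodMk_nhds (tendsto_const_nhds.add hb0)
  · filter_upwards [ha_pos, hb_pos] with t (hat : 0 < a t) (hbt : 0 < b t)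
    exact ⟨by linarith, by linarith⟩

theorem volume_inter_Ioo_le_of_null_left {C : Set ℝ} {a y u v : ℝ}
    (h0 : volume (C ∩ Ioo a y) = 0) (hau : a ≤ u) :
    volume (C ∩ Ioo u v) ≤ ENNReal.ofReal (v - y) := by
  have hsub : C ∩ Ioo u v ⊆ (C ∩ Ioo a y) ∪ Ico y v := by
    rintro t ⟨htC, hut, htv⟩
    rcases lt_or_ge t y with hty | hyt
    · exact Or.inl ⟨htC, hau.trans_lt hut, hty⟩
    · exact Or.inr ⟨hyt, htv⟩
  calc volume (C ∩ Ioo u v) ≤ volume ((C ∩ Ioo a y) ∪ Ico y v) := measure_mono hsub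
    _ ≤ volume (C ∩ Ioo a y) + volume (Ico y v) := measure_union_le _ _
    _ = ENNReal.ofReal (v - y) := by rw [h0, zero_add, Real.volume_Ico]

theorem volume_inter_Ioo_le_of_null_right {C : Set ℝ} {b y u v : ℝ}
    (h0 : volume (C ∩ Ioo y b) = 0) (hvb : v ≤ b) :
    volume (C ∩ Ioo u v) ≤ ENNReal.ofReal (y - u) := by
  have hsub : C ∩ Ioo u v ⊆ (C ∩ Ioo y b) ∪ Ioc u y := by
    rintro t ⟨htC, hut, htv⟩
    rcases lt_or_ge y t with hyt | hty
    · exact Or.inl ⟨htC, hyt, htv.trans_le hvb⟩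
    · exact Or.inr ⟨hut, hty⟩
  calc volume (C ∩ Ioo u v) ≤ volume ((C ∩ Ioo y b) ∪ Ioc u y) := measure_mono hsub
    _ ≤ volume (C ∩ Ioo y b) + volume (Ioc u y) := measure_union_le _ _
    _ = ENNReal.ofReal (y - u) := by rw [h0, zero_add, Real.volume_Ioc]

namespace IsDensityPoint

variable {C : Set ℝ} {y : ℝ}

theorem not_eventually_ratio_le {α : Type*} {l : Filter α} [l.NeBot] {φ : α → ℝ × ℝ}
    {r : α → ENNReal} (h : IsDensityPoint C y)
    (hφ : Tendsto φ l (𝓝[{p : ℝ × ℝ | p.1 < y ∧ y < p.2}] (y, y))) (hr : Tendsto r l (𝓝 0)) :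
    ¬ ∀ᶠ t in l, volume (C ∩ Ioo (φ t).1 (φ t).2) / volume (Ioo (φ t).1 (φ t).2) ≤ r t := by
  intro hle
  have h0 := tendsto_of_tendsto_of_tendsto_of_le_of_le' tendsto_const_nhds hr
    (Eventually.of_forall fun _ => zero_le) hle
  exact zero_ne_one (tendsto_nhds_unique h0 (h.comp hφ))

theorem volume_inter_Ioo_left_pos (h : IsDensityPoint C y) {a : ℝ} (ha : a < y) :
    0 < volume (C ∩ Ioo a y) := by
  refine pos_iff_ne_zero.2 fun h0 => h.not_eventually_ratio_le
    (tendsto_straddle_nhdsWithin tendsto_id tendsto_sq_nhdsGT_zero)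
    ENNReal.tendsto_ofReal_nhdsGT_zero ?_
  filter_upwards [Ioo_mem_nhdsGT (sub_pos.2 ha)] with ε ⟨hε, hεa⟩
  apply ENNReal.div_le_of_le_mul
  calc volume (C ∩ Ioo (y - ε) (y + ε ^ 2))
      ≤ ENNReal.ofReal (y + ε ^ 2 - y) := volume_inter_Ioo_le_of_null_left h0 (by linarith)
    _ ≤ ENNReal.ofReal (ε * (y + ε ^ 2 - (y - ε))) := ENNReal.ofReal_le_ofReal (by nlinarith)
    _ = ENNReal.ofReal ε * volume (Ioo (y - ε) (y + ε ^ 2)) := by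
      rw [Real.volume_Ioo, ENNReal.ofReal_mul hε.le]

theorem volume_inter_Ioo_right_pos (h : IsDensityPoint C y) {b : ℝ} (hb : y < b) :
    0 < volume (C ∩ Ioo y b) := by
  refine pos_iff_ne_zero.2 fun h0 => h.not_eventually_ratio_le
    (tendsto_straddle_nhdsWithin tendsto_sq_nhdsGT_zero tendsto_id)
    ENNReal.tendsto_ofReal_nhdsGT_zero ?_
  filter_upwards [Ioo_mem_nhdsGT (sub_pos.2 hb)] with ε ⟨hε, hεb⟩
  apply ENNReal.div_le_of_le_mul
  calc volume (C ∩ Ioo (y - ε ^ 2) (y + ε))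
      ≤ ENNReal.ofReal (y - (y - ε ^ 2)) := volume_inter_Ioo_le_of_null_right h0 (by linarith)
    _ ≤ ENNReal.ofReal (ε * (y + ε - (y - ε ^ 2))) := ENNReal.ofReal_le_ofReal (by nlinarith)
    _ = ENNReal.ofReal ε * volume (Ioo (y - ε ^ 2) (y + ε)) := by
      rw [Real.volume_Ioo, ENNReal.ofReal_mul hε.le]

end IsDensityPoint

theorem stmt_12_general (C : Set ℝ)
    (hdens : ∀ y ∈ C,
      Tendsto (fun p : ℝ × ℝ =>
          volume (C ∩ Set.Ioo p.1 p.2) / volume (Set.Ioo p.1 p.2))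
        (𝓝[{p : ℝ × ℝ | p.1 < y ∧ y < p.2}] (y, y)) (𝓝 1))
    (x z : ℝ)
    (hpos : 0 < volume (C ∩ Set.Ioo x z)) :
    ∃ y ∈ C ∩ Set.Ioo x z,
      0 < volume (C ∩ Set.Ioo x y) ∧ 0 < volume (C ∩ Set.Ioo y z) := by
  obtain ⟨y, hyC, hxy, hyz⟩ := nonempty_of_measure_ne_zero hpos.ne'
  have hy : IsDensityPoint C y := hdens y hyC
  exact ⟨y, ⟨hyC, hxy, hyz⟩, hy.volume_inter_Ioo_left_pos hxy, hy.volume_inter_Ioo_right_pos hyz⟩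

theorem stmt_12 (C : Set ℝ) (hC : MeasurableSet C)
    (hdens : ∀ y ∈ C,
      Tendsto (fun p : ℝ × ℝ =>
          volume (C ∩ Set.Ioo p.1 p.2) / volume (Set.Ioo p.1 p.2))
        (𝓝[{p : ℝ × ℝ | p.1 < y ∧ y < p.2}] (y, y)) (𝓝 1))
    (x z : ℝ) (hxz : x < z)
    (hpos : 0 < volume (C ∩ Set.Ioo x z)) :
    ∃ y ∈ C ∩ Set.Ioo x z,
      0 < volume (C ∩ Set.Ioo x y) ∧ 0 < volume (C ∩ Set.Ioo y z) :=
  stmt_12_general C hdens x z hpos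
end

section
/- Let 1 ≤ p < ∞ and w > 0 a.e. on I = (0,l). The space C_{p,w}(I) is nontrivial (contains a nonzero function) if and only if ∫_c^l w(x)^p dx < ∞ for some c ∈ I. -/
open Set Filter Topology MeasureTheory ENNReal

def CesI (l : EReal) : Set ℝ := {x : ℝ | 0 < x ∧ (x : EReal) < l}

noncomputable def cesNorm (l : EReal) (p : ℝ) (w f : ℝ → ℝ) : ℝ≥0∞ :=
  (∫⁻ x in CesI l,
      (ENNReal.ofReal (w x) * ∫⁻ t in Set.Ioo 0 x, ENNReal.ofReal |f t|) ^ p) ^ (1 / p)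

/-!
If `f ≠ 0` has finite norm, its primitive `F(x) = ∫₀ˣ |f|` is positive from some `c ∈ I` on and
monotone, so `F(c)ᵖ ∫_c^l wᵖ ≤ ∫_I (w F)ᵖ < ∞`. Conversely, if `∫_c^l wᵖ < ∞`, the indicator of a
nonempty interval `(c, c')` has a primitive that vanishes on `(0, c]` and is bounded by `c' - c`,
hence finite norm.
-/

noncomputable def cesPrimitive (f : ℝ → ℝ) (x : ℝ) : ℝ≥0∞ :=
  ∫⁻ t in Ioo 0 x, ENNReal.ofReal |f t|

lemma cesPrimitive_mono (f : ℝ → ℝ) : Monotone (cesPrimitive f) :=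
  fun _ _ hab => lintegral_mono_set (Ioo_subset_Ioo le_rfl hab)

lemma cesNorm_lt_top_iff {l : EReal} {p : ℝ} (hp : 0 < p) (w f : ℝ → ℝ) :
    cesNorm l p w f < ⊤ ↔
      ∫⁻ x in CesI l, (ENNReal.ofReal (w x) * cesPrimitive f x) ^ p < ⊤ :=
  ENNReal.rpow_lt_top_iff_of_pos (by positivity)

lemma measurableSet_Ioi_inter_coe_lt (c : ℝ) (l : EReal) :
    MeasurableSet {x : ℝ | c < x ∧ (x : EReal) < l} :=
  measurableSet_Ioi.inter (measurable_coe_real_ereal measurableSet_Iio)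

lemma setOf_lt_lt_subset_CesI {c : ℝ} (hc : 0 ≤ c) (l : EReal) :
    {x : ℝ | c < x ∧ (x : EReal) < l} ⊆ CesI l :=
  fun _ hx => (⟨hc.trans_lt hx.1, hx.2⟩ : _ ∧ _)

lemma CesI_eq_biUnion_rat (l : EReal) :
    CesI l = ⋃ q ∈ {q : ℚ | (q : ℝ) ∈ CesI l}, Ioo 0 (q : ℝ) := by
  ext x
  simp only [mem_iUnion, mem_ofPred_eq, exists_prop]
  constructor
  · rintro ⟨hx0, hxl⟩
    obtain ⟨y, hxy, hyl⟩ := EReal.exists_between_coe_real hxl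
    obtain ⟨q, hxq, hqy⟩ := exists_rat_btwn (EReal.coe_lt_coe_iff.mp hxy)
    exact ⟨q, ⟨hx0.trans hxq, (EReal.coe_lt_coe hqy).trans hyl⟩, hx0, hxq⟩
  · rintro ⟨q, ⟨-, hql⟩, hx0, hxq⟩
    exact ⟨hx0, (EReal.coe_lt_coe hxq).trans hql⟩

lemma ae_eq_zero_of_cesPrimitive_eq_zero {l : EReal} {f : ℝ → ℝ} (hf : Measurable f)
    (h : ∀ c ∈ CesI l, cesPrimitive f c = 0) :
    ∀ᵐ x ∂(volume.restrict (CesI l)), f x = 0 := by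
  rw [CesI_eq_biUnion_rat, ae_restrict_biUnion_iff _ (Set.to_countable _)]
  intro q hq
  have hq0 := (lintegral_eq_zero_iff hf.abs.ennreal_ofReal).mp (h q hq)
  filter_upwards [hq0] with x hx
  simpa using hx

lemma exists_cesPrimitive_pos {l : EReal} {f : ℝ → ℝ} (hf : Measurable f)
    (hne : ¬ ∀ᵐ x ∂(volume.restrict (CesI l)), f x = 0) :
    ∃ c ∈ CesI l, 0 < cesPrimitive f c := by
  contrapose! hne
  exact ae_eq_zero_of_cesPrimitive_eq_zero hf fun c hc => nonpos_iff_eq_zero.mp (hne c hc)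

section Tail

variable {S J : Set ℝ} {W F : ℝ → ℝ≥0∞} {p : ℝ}

lemma lintegral_rpow_lt_top_of_monotone_factor (hJ : MeasurableSet J) (hJS : J ⊆ S) {c : ℝ}
    (hcJ : ∀ x ∈ J, c ≤ x) (hF : Monotone F) (hFc : F c ≠ 0) (hp : 0 ≤ p)
    (hfin : ∫⁻ x in S, (W x * F x) ^ p < ⊤) :
    ∫⁻ x in J, W x ^ p < ⊤ := by
  have hbound : F c ^ p * ∫⁻ x in J, W x ^ p ≤ ∫⁻ x in S, (W x * F x) ^ p :=
    calc F c ^ p * ∫⁻ x in J, W x ^ p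
        ≤ ∫⁻ x in J, F c ^ p * W x ^ p := lintegral_const_mul_le _ _
      _ ≤ ∫⁻ x in J, (W x * F x) ^ p := setLIntegral_mono' hJ fun x hx => by
          rw [ENNReal.mul_rpow_of_nonneg _ _ hp, mul_comm]
          gcongr
          exact hF (hcJ x hx)
      _ ≤ ∫⁻ x in S, (W x * F x) ^ p := lintegral_mono_set hJS
  refine ENNReal.lt_top_of_mul_ne_top_right (hbound.trans_lt hfin).ne ?_
  simp [ENNReal.rpow_eq_zero_iff, hFc, hp.not_gt]

lemma lintegral_mul_rpow_lt_top_of_bounded_factor (hS : MeasurableSet S) (hJ : MeasurableSet J)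
    {M : ℝ≥0∞} (hM : M ≠ ⊤) (hFM : ∀ x, F x ≤ M) (hF0 : ∀ x ∈ S, x ∉ J → F x = 0) (hp : 0 < p)
    (hfin : ∫⁻ x in J, W x ^ p < ⊤) :
    ∫⁻ x in S, (W x * F x) ^ p < ⊤ := by
  have hpoint : ∀ x ∈ S, (W x * F x) ^ p ≤ J.indicator (fun x => W x ^ p * M ^ p) x := by
    intro x hx
    by_cases hxJ : x ∈ J
    · rw [indicator_of_mem hxJ, ← ENNReal.mul_rpow_of_nonneg _ _ hp.le]
      gcongr
      exact hFM x
    · simp [hF0 x hx hxJ, ENNReal.zero_rpow_of_pos hp]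
  calc ∫⁻ x in S, (W x * F x) ^ p
      ≤ ∫⁻ x in S, J.indicator (fun x => W x ^ p * M ^ p) x := setLIntegral_mono' hS hpoint
    _ ≤ ∫⁻ x in J, W x ^ p * M ^ p := by
        rw [← lintegral_indicator hJ]
        exact setLIntegral_le_lintegral _ _
    _ = (∫⁻ x in J, W x ^ p) * M ^ p :=
        lintegral_mul_const' _ _ (ENNReal.rpow_ne_top_of_nonneg hp.le hM)
    _ < ⊤ := ENNReal.mul_lt_top hfin (ENNReal.rpow_lt_top_of_nonneg hp.le hM)

end Tail

lemma cesPrimitive_indicator_Ioo_le (a b x : ℝ) :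
    cesPrimitive ((Ioo a b).indicator 1) x ≤ ENNReal.ofReal (b - a) :=
  calc cesPrimitive ((Ioo a b).indicator 1) x
      = ∫⁻ t in Ioo 0 x, (Ioo a b).indicator 1 t := by
        refine lintegral_congr fun t => ?_
        by_cases ht : t ∈ Ioo a b <;> simp [ht]
    _ ≤ ∫⁻ t, (Ioo a b).indicator 1 t := setLIntegral_le_lintegral _ _
    _ = ENNReal.ofReal (b - a) := by
        rw [lintegral_indicator_one measurableSet_Ioo, Real.volume_Ioo]

lemma cesPrimitive_indicator_Ioo_of_le {a b x : ℝ} (hx : x ≤ a) :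
    cesPrimitive ((Ioo a b).indicator 1) x = 0 := by
  refine (setLIntegral_congr_fun measurableSet_Ioo fun t ht => ?_).trans lintegral_zero
  simp [indicator_of_notMem (fun h : t ∈ Ioo a b => (ht.2.trans_le hx).not_gt h.1)]

lemma indicator_Ioo_not_ae_eq_zero {S : Set ℝ} {a b : ℝ} (hab : a < b) (hS : Ioo a b ⊆ S) :
    ¬ ∀ᵐ x ∂(volume.restrict S), (Ioo a b).indicator (1 : ℝ → ℝ) x = 0 := by
  intro h
  have hfalse : ∀ᵐ _ ∂(volume.restrict (Ioo a b)), False := by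
    filter_upwards [ae_restrict_of_ae_restrict_of_subset hS h,
      ae_restrict_mem measurableSet_Ioo] with x hx hxab
    simp [indicator_of_mem hxab] at hx
  rw [eventually_false_iff_eq_bot, ae_eq_bot, Measure.restrict_eq_zero, Real.volume_Ioo] at hfalse
  exact (ENNReal.ofReal_pos.mpr (sub_pos.mpr hab)).ne' hfalse

theorem stmt_14_general (l : EReal) (p : ℝ) (hp : 1 ≤ p) (w : ℝ → ℝ) :
    (∃ f : ℝ → ℝ, Measurable f ∧ cesNorm l p w f < ⊤ ∧
        ¬ (∀ᵐ x ∂(volume.restrict (CesI l)), f x = 0)) ↔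
      ∃ c ∈ CesI l,
        (∫⁻ x in {x : ℝ | c < x ∧ (x : EReal) < l}, ENNReal.ofReal (w x) ^ p) < ⊤ := by
  have hp0 : 0 < p := zero_lt_one.trans_le hp
  constructor
  · rintro ⟨f, hf, hnorm, hne⟩
    obtain ⟨c, hc, hFc⟩ := exists_cesPrimitive_pos hf hne
    exact ⟨c, hc, lintegral_rpow_lt_top_of_monotone_factor (measurableSet_Ioi_inter_coe_lt c l)
      (setOf_lt_lt_subset_CesI hc.1.le l) (fun _ hx => hx.1.le) (cesPrimitive_mono f)
      hFc.ne' hp0.le ((cesNorm_lt_top_iff hp0 w f).mp hnorm)⟩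
  · rintro ⟨c, hc, htail⟩
    obtain ⟨c', hcc', hc'l⟩ := EReal.exists_between_coe_real hc.2
    have hcc' : c < c' := EReal.coe_lt_coe_iff.mp hcc'
    have hsub : Ioo c c' ⊆ CesI l := fun x hx =>
      setOf_lt_lt_subset_CesI hc.1.le l ⟨hx.1, (EReal.coe_lt_coe hx.2).trans hc'l⟩
    refine ⟨(Ioo c c').indicator 1, measurable_one.indicator measurableSet_Ioo, ?_,
      indicator_Ioo_not_ae_eq_zero hcc' hsub⟩
    rw [cesNorm_lt_top_iff hp0]
    exact lintegral_mul_rpow_lt_top_of_bounded_factor (measurableSet_Ioi_inter_coe_lt 0 l)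
      (measurableSet_Ioi_inter_coe_lt c l) ENNReal.ofReal_ne_top
      (cesPrimitive_indicator_Ioo_le c c') (fun x hx hxJ => cesPrimitive_indicator_Ioo_of_le
        (not_lt.mp fun hcx => hxJ ⟨hcx, hx.2⟩)) hp0 htail

/-- `C_{p,w}(I) ≠ {0}` iff `∫_c^l w^p < ∞` for some `c ∈ I`. -/
theorem stmt_14 (l : EReal) (hl : 0 < l) (p : ℝ) (hp : 1 ≤ p) (w : ℝ → ℝ)
    (hw : Measurable w) (hwpos : ∀ᵐ x ∂(volume.restrict (CesI l)), 0 < w x) :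
    (∃ f : ℝ → ℝ, Measurable f ∧ cesNorm l p w f < ⊤ ∧
        ¬ (∀ᵐ x ∂(volume.restrict (CesI l)), f x = 0)) ↔
      ∃ c ∈ CesI l,
        (∫⁻ x in {x : ℝ | c < x ∧ (x : EReal) < l}, ENNReal.ofReal (w x) ^ p) < ⊤ :=
  stmt_14_general l p hp w
end

section
/- Let 1 ≤ p < ∞ and w > 0 a.e. on I = (0,l) with C_{p,w}(I) ≠ {0}. Then C_{p,w}(I) is not continuously embedded into L₁(I): there exists a sequence (gₙ) with ‖gₙ‖_{C_{p,w}} ≤ 1 and ‖gₙ‖_{L₁} → ∞. -/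
open Set Filter Topology MeasureTheory ENNReal

def tailSet (l : EReal) (a : ℝ) : Set ℝ := {x : ℝ | a < x ∧ (x : EReal) < l}

lemma measurableSet_tailSet (l : EReal) (a : ℝ) : MeasurableSet (tailSet l a) :=
  measurableSet_Ioi.inter (measurable_coe_real_ereal measurableSet_Iio)

lemma exists_measure_tailSet_lt (μ : Measure ℝ) {l : EReal} {c : ℝ} (hc : (c : EReal) < l)
    (hfin : μ (tailSet l c) ≠ ∞) {ε : ℝ≥0∞} (hε : 0 < ε) :
    ∃ a : ℝ, c < a ∧ (a : EReal) < l ∧ μ (tailSet l a) < ε := by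
  obtain ⟨u, hu_mono, hu_mem, hu_lim⟩ := exists_seq_strictMono_tendsto' hc
  set s : ℕ → Set ℝ := fun k => {x : ℝ | u k < x ∧ (x : EReal) < l}
  have hs_anti : Antitone s := fun i j hij x hx => ⟨(hu_mono.monotone hij).trans_lt hx.1, hx.2⟩
  have hs_empty : ⋂ k, s k = ∅ := by
    refine eq_empty_of_forall_notMem fun x hx => ?_
    have hx' : ∀ k, u k ≤ x := fun k => (mem_iInter.1 hx k).1.le
    exact lt_irrefl _ ((mem_iInter.1 hx 0).2.trans_le (le_of_tendsto' hu_lim hx'))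
  have hs_meas : ∀ k, MeasurableSet (s k) := fun k =>
    measurable_coe_real_ereal (measurableSet_Ioi.inter measurableSet_Iio)
  have hs0 : μ (s 0) ≠ ∞ :=
    ne_top_of_le_ne_top hfin <| measure_mono fun x hx =>
      ⟨by exact_mod_cast (hu_mem 0).1.trans hx.1, hx.2⟩
  have hlim :=
    tendsto_measure_iInter_atTop (fun k => (hs_meas k).nullMeasurableSet) hs_anti ⟨0, hs0⟩
  rw [hs_empty, measure_empty] at hlim
  obtain ⟨k, hk⟩ := (hlim.eventually_lt_const hε).exists
  obtain ⟨a, hua, hal⟩ := EReal.lt_iff_exists_real_btwn.1 (hu_mem k).2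
  refine ⟨a, by exact_mod_cast (hu_mem k).1.trans hua, hal, (measure_mono ?_).trans_lt hk⟩
  exact fun x hx => ⟨hua.trans (by exact_mod_cast hx.1), hx.2⟩

lemma cesNorm_le_of_eq_zero_of_le {l : EReal} {p : ℝ} (hp : 0 < p) (w : ℝ → ℝ) {f : ℝ → ℝ}
    {a : ℝ} (hf : ∀ t ≤ a, f t = 0) (hf_int : ∫⁻ t, ENNReal.ofReal |f t| ≠ ∞) :
    cesNorm l p w f ≤
      (∫⁻ t, ENNReal.ofReal |f t|) * (∫⁻ x in tailSet l a, ENNReal.ofReal (w x) ^ p) ^ (1 / p) := by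
  set M := ∫⁻ t, ENNReal.ofReal |f t|
  have hpoint : ∀ x ∈ CesI l,
      (ENNReal.ofReal (w x) * ∫⁻ t in Ioo 0 x, ENNReal.ofReal |f t|) ^ p ≤
        (tailSet l a).indicator (fun x => M ^ p * ENNReal.ofReal (w x) ^ p) x := by
    intro x hx
    by_cases hax : a < x
    · rw [indicator_of_mem (show x ∈ tailSet l a from ⟨hax, hx.2⟩),
        ← ENNReal.mul_rpow_of_nonneg _ _ hp.le, mul_comm]
      gcongr
      exact setLIntegral_le_lintegral _ _
    · have hzero : ∫⁻ t in Ioo 0 x, ENNReal.ofReal |f t| = 0 := by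
        rw [setLIntegral_congr_fun measurableSet_Ioo fun t ht => by
          rw [hf t ((le_of_lt ht.2).trans (not_lt.1 hax)), abs_zero, ENNReal.ofReal_zero]]
        exact lintegral_zero
      rw [hzero, mul_zero, ENNReal.zero_rpow_of_pos hp]
      exact zero_le
  have hbound : ∫⁻ x in CesI l,
      (ENNReal.ofReal (w x) * ∫⁻ t in Ioo 0 x, ENNReal.ofReal |f t|) ^ p ≤
        M ^ p * ∫⁻ x in tailSet l a, ENNReal.ofReal (w x) ^ p :=
    calc _ ≤ ∫⁻ x in CesI l,
            (tailSet l a).indicator (fun x => M ^ p * ENNReal.ofReal (w x) ^ p) x :=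
          -- `CesI l` is `tailSet l 0` by definition.
          setLIntegral_mono' (measurableSet_tailSet l 0) hpoint
      _ ≤ ∫⁻ x, (tailSet l a).indicator (fun x => M ^ p * ENNReal.ofReal (w x) ^ p) x :=
          setLIntegral_le_lintegral _ _
      _ = _ := by
          rw [lintegral_indicator (measurableSet_tailSet l a),
            lintegral_const_mul' _ _ (ENNReal.rpow_ne_top_of_nonneg hp.le hf_int)]
  calc cesNorm l p w f ≤ (M ^ p * ∫⁻ x in tailSet l a, ENNReal.ofReal (w x) ^ p) ^ (1 / p) :=
        ENNReal.rpow_le_rpow hbound (by positivity)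
    _ = _ := by
        rw [ENNReal.mul_rpow_of_nonneg _ _ (by positivity), one_div,
          ENNReal.rpow_rpow_inv hp.ne']

noncomputable def bump (a b r : ℝ) : ℝ → ℝ := (Ioo a b).indicator fun _ => r / (b - a)

lemma measurable_bump (a b r : ℝ) : Measurable (bump a b r) :=
  measurable_const.indicator measurableSet_Ioo

lemma bump_eq_zero_of_le {a b r t : ℝ} (ht : t ≤ a) : bump a b r t = 0 :=
  indicator_of_notMem (fun h => (not_lt.2 ht) h.1) _

lemma setLIntegral_bump {a b r : ℝ} (hab : a < b) (hr : 0 ≤ r) {s : Set ℝ}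
    (hs : Ioo a b ⊆ s) : ∫⁻ t in s, ENNReal.ofReal |bump a b r t| = ENNReal.ofReal r := by
  have hba : 0 < b - a := sub_pos.2 hab
  have habs : (fun t => ENNReal.ofReal |bump a b r t|) =
      (Ioo a b).indicator fun _ => ENNReal.ofReal (r / (b - a)) := by
    ext t
    by_cases ht : t ∈ Ioo a b <;> simp [bump, ht, abs_of_nonneg (div_nonneg hr hba.le)]
  rw [habs, lintegral_indicator_const measurableSet_Ioo, Measure.restrict_apply measurableSet_Ioo,
    inter_eq_left.2 hs, Real.volume_Ioo, ← ENNReal.ofReal_mul (div_nonneg hr hba.le),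
    div_mul_cancel₀ _ hba.ne']

theorem stmt_15_general (l : EReal) (p : ℝ) (hp : 1 ≤ p) (w : ℝ → ℝ)
    (hnontriv : ∃ c ∈ CesI l,
      (∫⁻ x in {x : ℝ | c < x ∧ (x : EReal) < l}, ENNReal.ofReal (w x) ^ p) < ⊤) :
    ∃ g : ℕ → ℝ → ℝ, (∀ n, Measurable (g n)) ∧
      (∀ n, cesNorm l p w (g n) ≤ 1) ∧
      Tendsto (fun n => ∫⁻ t in CesI l, ENNReal.ofReal |g n t|) atTop (𝓝 ⊤) := by
  obtain ⟨c, ⟨hc0, hcl⟩, hfin⟩ := hnontriv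
  have hp0 : 0 < p := zero_lt_one.trans_le hp
  set ν := volume.withDensity fun x => ENNReal.ofReal (w x) ^ p
  have hν (a : ℝ) : ν (tailSet l a) = ∫⁻ x in tailSet l a, ENNReal.ofReal (w x) ^ p :=
    withDensity_apply' _ _
  have hsmall (n : ℕ) : ∃ a b : ℝ, 0 < a ∧ a < b ∧ (b : EReal) < l ∧
      ν (tailSet l a) < ((n : ℝ≥0∞) ^ p)⁻¹ := by
    obtain ⟨a, hca, hal, ha⟩ := exists_measure_tailSet_lt ν hcl (by rw [hν]; exact hfin.ne)
      (ENNReal.inv_pos.2 (ENNReal.rpow_ne_top_of_nonneg hp0.le (natCast_ne_top n)))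
    obtain ⟨b, hab, hbl⟩ := EReal.lt_iff_exists_real_btwn.1 hal
    exact ⟨a, b, hc0.trans hca, by exact_mod_cast hab, hbl, ha⟩
  choose a b ha hab hbl hν_small using hsmall
  have hL1 (n : ℕ) {s : Set ℝ} (hs : Ioo (a n) (b n) ⊆ s) :
      ∫⁻ t in s, ENNReal.ofReal |bump (a n) (b n) n t| = n := by
    rw [setLIntegral_bump (hab n) n.cast_nonneg hs, ENNReal.ofReal_natCast]
  refine ⟨fun n => bump (a n) (b n) n, fun n => measurable_bump _ _ _, fun n => ?_, ?_⟩
  · have hL1_univ := hL1 n (subset_univ _)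
    rw [Measure.restrict_univ] at hL1_univ
    calc cesNorm l p w (bump (a n) (b n) n)
        ≤ n * (∫⁻ x in tailSet l (a n), ENNReal.ofReal (w x) ^ p) ^ (1 / p) := by
          simpa only [hL1_univ] using
            cesNorm_le_of_eq_zero_of_le (f := bump (a n) (b n) n) hp0 w
              (fun t ht => bump_eq_zero_of_le ht) (hL1_univ ▸ natCast_ne_top n)
      _ ≤ n * (((n : ℝ≥0∞) ^ p)⁻¹) ^ (1 / p) := by
          rw [← hν]
          gcongr
          exact (hν_small n).le
      _ = n * (n : ℝ≥0∞)⁻¹ := by rw [ENNReal.inv_rpow, one_div, ENNReal.rpow_rpow_inv hp0.ne']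
      _ ≤ 1 := ENNReal.mul_inv_le_one _
  · have hsub (n : ℕ) : Ioo (a n) (b n) ⊆ CesI l := fun x hx =>
      ⟨(ha n).trans hx.1, (EReal.coe_lt_coe_iff.2 hx.2).trans (hbl n)⟩
    simp_rw [hL1 _ (hsub _)]
    exact ENNReal.tendsto_nat_nhds_top

/-- A nontrivial `C_{p,w}(I)` is not continuously embedded into `L₁(I)`. -/
theorem stmt_15 (l : EReal) (hl : 0 < l) (p : ℝ) (hp : 1 ≤ p) (w : ℝ → ℝ)
    (hw : Measurable w) (hwpos : ∀ᵐ x ∂(volume.restrict (CesI l)), 0 < w x)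
    (hnontriv : ∃ c ∈ CesI l,
      (∫⁻ x in {x : ℝ | c < x ∧ (x : EReal) < l}, ENNReal.ofReal (w x) ^ p) < ⊤) :
    ∃ g : ℕ → ℝ → ℝ, (∀ n, Measurable (g n)) ∧
      (∀ n, cesNorm l p w (g n) ≤ 1) ∧
      Tendsto (fun n => ∫⁻ t in CesI l, ENNReal.ofReal |g n t|) atTop (𝓝 ⊤) :=
  stmt_15_general l p hp w hnontriv
end
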